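/- arXiv:2509.05137 — 2 statements merged into one kernel-verified Lean document; each statement's English description precedes it below -/
import Mathlib

section
/- Let C be a class of distributions on a countable domain X, let m ∈ ℕ, let γ, ζ ∈ (0,1), and let (V1,V2) be a pair of adaptive adversaries that successfully (γ,ζ)-confuses C-generated samples of size m. Then for every learner A : X* → Δ(X) there exists r ∈ C such that P_{S∼r^m}[d_TV(A(V1(S)), r) > γ/2] ≥ 1/2 − ζ/2 or P_{S∼r^m}[d_TV(A(V2(S)), r) > γ/2] ≥ 1/2 − ζ/2, where the probabilities include the adversaries' internal randomness. -/
open scoped ENNReal NNReal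

/-- Total variation distance between two discrete distributions. -/
noncomputable def tv {X : Type*} (p q : PMF X) : ℝ :=
  (∑' x, |(p x).toReal - (q x).toReal|) / 2

/-- The distribution of an i.i.d. sample of size `m` from `p`, viewed as a multiset. -/
noncomputable def iid {X : Type*} (p : PMF X) : ℕ → PMF (Multiset X)
  | 0 => PMF.pure 0
  | n + 1 => (iid p n).bind fun s => p.map fun x => x ::ₘ s

/-- `|Q|^m` : first draw `q ∼ Q`, then an i.i.d. sample `S ∼ q^m`. -/
noncomputable def metaSample {X : Type*} (Q : PMF (PMF X)) (m : ℕ) : PMF (Multiset X) :=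
  Q.bind fun q => iid q m

/-- An adaptive adversary: a randomized map from samples (finite multisets) to samples. -/
abbrev Adversary (X : Type*) := Multiset X → PMF (Multiset X)

/-- `V(P)`: the distribution of `V S` for `S ∼ P` (including internal randomness). -/
noncomputable def advPush {X : Type*} (V : Adversary X) (P : PMF (Multiset X)) :
    PMF (Multiset X) := P.bind V

/-- An additive adversary only adds points: `S ⊆ V(S)` almost surely. -/
def IsAdditive {X : Type*} (V : Adversary X) : Prop :=
  ∀ S T, T ∈ (V S).support → S ≤ T

/-- A subtractive adversary only removes points: `V(S) ⊆ S` almost surely. -/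
def IsSubtractive {X : Type*} (V : Adversary X) : Prop :=
  ∀ S T, T ∈ (V S).support → T ≤ S

/-- Fixed constant budget `η`: `|V(S)|` depends only on `|S|` (via `c`), and for every `m`,
`η m − 1 < m·budget(V,m) ≤ η m` where `m·budget(V,m) = ||V(S)| − |S||`. -/
def FixedBudget {X : Type*} (V : Adversary X) (η : ℝ) : Prop :=
  ∃ c : ℕ → ℕ, (∀ S T, T ∈ (V S).support → Multiset.card T = c (Multiset.card S)) ∧
    ∀ m : ℕ, η * m - 1 < |(c m : ℝ) - m| ∧ |(c m : ℝ) - m| ≤ η * m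

/-- Fixed constant budget `η` for an additive adversary (`m·budget(V,m) = |V(S)| − |S|`). -/
def FixedBudgetAdd {X : Type*} (V : Adversary X) (η : ℝ) : Prop :=
  ∃ c : ℕ → ℕ, (∀ S T, T ∈ (V S).support → Multiset.card T = c (Multiset.card S)) ∧
    ∀ m : ℕ, η * m - 1 < (c m : ℝ) - m ∧ (c m : ℝ) - m ≤ η * m

/-- Fixed constant budget `η` for a subtractive adversary (`m·budget(V,m) = |S| − |V(S)|`). -/
def FixedBudgetSub {X : Type*} (V : Adversary X) (η : ℝ) : Prop :=
  ∃ c : ℕ → ℕ, (∀ S T, T ∈ (V S).support → Multiset.card T = c (Multiset.card S)) ∧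
    ∀ m : ℕ, η * m - 1 < (m : ℝ) - c m ∧ (m : ℝ) - c m ≤ η * m

/-- Probability of an event under a discrete distribution. -/
noncomputable def probEvent {β : Type*} (P : PMF β) (E : Set β) : ℝ≥0∞ :=
  P.toOuterMeasure E

/-- `A` with sample complexity `mc` learns the class `C` against adversary `V`,
up to error `bound + ε` with confidence `1 − δ` once `m ≥ mc ε δ`. -/
def RobustLearnerFor {X : Type*} (C : Set (PMF X)) (A : Multiset X → PMF X)
    (mc : ℝ → ℝ → ℕ) (V : Adversary X) (bound : ℝ) : Prop :=
  ∀ p ∈ C, ∀ ε δ : ℝ, 0 < ε → ε < 1 → 0 < δ → δ < 1 →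
    ∀ m : ℕ, mc ε δ ≤ m →
      1 - ENNReal.ofReal δ ≤
        probEvent ((iid p m).bind V) {T | tv (A T) p ≤ bound + ε}

/-- `C` is adaptively α-robustly learnable w.r.t. the single adversary `V` with budget `η`. -/
def RobustlyLearnableWrt {X : Type*} (C : Set (PMF X)) (α : ℝ)
    (V : Adversary X) (η : ℝ) : Prop :=
  ∃ A mc, RobustLearnerFor C A mc V (α * η)

/-- `V` (with budget `η`) is a universal α-adversary for `C`. -/
def UniversalAdversary {X : Type*} (C : Set (PMF X)) (α : ℝ)
    (V : Adversary X) (η : ℝ) : Prop :=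
  ¬ RobustlyLearnableWrt C α V η

/-- `C` is adaptively α-robustly learnable w.r.t. a class `𝒱` of adversaries
(each given with its budget). -/
def RobustlyLearnableWrtClass {X : Type*} (C : Set (PMF X)) (α : ℝ)
    (𝒱 : Set (Adversary X × ℝ)) : Prop :=
  ∃ A mc, ∀ Vη ∈ 𝒱, RobustLearnerFor C A mc Vη.1 (α * Vη.2)

/-- `C` is adaptively additively α-robustly learnable: one learner works simultaneously
against all additive adaptive adversaries with fixed constant budgets. -/
def AdditivelyRobustlyLearnable {X : Type*} (C : Set (PMF X)) (α : ℝ) : Prop :=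
  ∃ A mc, ∀ V : Adversary X, ∀ η : ℝ, 0 < η → η < 1 →
    IsAdditive V → FixedBudgetAdd V η → RobustLearnerFor C A mc V (α * η)

/-- `C` is adaptively subtractively α-robustly learnable. -/
def SubtractivelyRobustlyLearnable {X : Type*} (C : Set (PMF X)) (α : ℝ) : Prop :=
  ∃ A mc, ∀ V : Adversary X, ∀ η : ℝ, 0 < η → η < 1 →
    IsSubtractive V → FixedBudgetSub V η → RobustLearnerFor C A mc V (α * η)

/-- The pair `(V1, V2)` successfully `(γ,ζ)`-confuses `C`-generated samples of size `m`. -/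
def ConfusesPair {X : Type*} (C : Set (PMF X)) (V1 V2 : Adversary X)
    (γ ζ : ℝ) (m : ℕ) : Prop :=
  ∃ p ∈ C, ∃ Q : PMF (PMF X), Q.support ⊆ C ∧
    (∀ q ∈ Q.support, γ < tv p q) ∧
    tv (advPush V1 (metaSample Q m)) (advPush V2 (iid p m)) < ζ

/-- A single adversary `V` successfully `(γ,ζ)`-confuses `C`-generated samples of size `m`. -/
def Confuses {X : Type*} (C : Set (PMF X)) (V : Adversary X) (γ ζ : ℝ) (m : ℕ) : Prop :=
  ConfusesPair C V V γ ζ m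

/-- `p` is the distribution `p_{i,j,k} = (1 − 1/j)·δ_{(0,0)} + (1/j − 1/k)·U_{B_i×{2j+1}}
 + (1/k)·δ_{(i,2j+2)}` on `ℕ × ℕ`. -/
def IsPijk (B : ℕ → Finset ℕ) (i j k : ℕ) (p : PMF (ℕ × ℕ)) : Prop :=
  ∀ x : ℕ × ℕ,
    p x = (1 - ((j : ℝ≥0∞))⁻¹) * (if x = (0, 0) then 1 else 0)
      + (((j : ℝ≥0∞))⁻¹ - ((k : ℝ≥0∞))⁻¹) *
          (if x.1 ∈ B i ∧ x.2 = 2 * j + 1 then (((B i).card : ℝ≥0∞))⁻¹ else 0)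
      + ((k : ℝ≥0∞))⁻¹ * (if x = (i, 2 * j + 2) then 1 else 0)

/-- The class `C_g = {p_{i,j,g(j)} : i, j ∈ ℕ}` (for the meaningful parameters). -/
def Cg (B : ℕ → Finset ℕ) (g : ℕ → ℕ) : Set (PMF (ℕ × ℕ)) :=
  {p | ∃ i j : ℕ, 1 ≤ j ∧ j < g j ∧ (B i).Nonempty ∧ IsPijk B i j (g j) p}

/-- `g` is superlinear: `g(n)/n → ∞`. -/
def Superlinear (g : ℕ → ℕ) : Prop :=
  Filter.Tendsto (fun n => (g n : ℝ) / n) Filter.atTop Filter.atTop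

/-!
Suppose a learner `A` failed with probability less than `1/2 - ζ/2` on every `r ∈ C` against
both adversaries. Let `E` be the event that `A` outputs a distribution
`γ/2`-close to `p`. Under `V2(p^m)` the event `E` has probability more than `1/2 + ζ/2`. Every
`q ∈ supp Q` is `γ`-far from `p`, so on `E` the learner fails for `q`, and `E` has probability at
most `1/2 - ζ/2` under `V1(q^m)`, hence under the mixture `V1(|Q|^m)`. Two laws that differ by
more than `ζ` on one event are at total variation distance more than `ζ`, contradicting the
confusion hypothesis.
-/

namespace PMF

variable {α : Type*}

lemma summable_toReal (p : PMF α) : Summable fun a => (p a).toReal :=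
  ENNReal.summable_toReal (p.tsum_coe ▸ ENNReal.one_ne_top)

lemma tsum_toReal (p : PMF α) : ∑' a, (p a).toReal = 1 := by
  rw [← ENNReal.tsum_toReal_eq p.apply_ne_top, p.tsum_coe, ENNReal.toReal_one]

end PMF

section probEvent

variable {α β : Type*}

lemma probEvent_add_probEvent_compl (P : PMF β) (E : Set β) :
    probEvent P E + probEvent P Eᶜ = 1 := by
  simp only [probEvent, PMF.toOuterMeasure_apply, ← ENNReal.tsum_add,
    Set.indicator_self_add_compl_apply, P.tsum_coe]

lemma probEvent_ne_top (P : PMF β) (E : Set β) : probEvent P E ≠ ∞ :=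
  ne_top_of_le_ne_top ENNReal.one_ne_top (probEvent_add_probEvent_compl P E ▸ le_self_add)

lemma probEvent_compl_toReal (P : PMF β) (E : Set β) :
    (probEvent P Eᶜ).toReal = 1 - (probEvent P E).toReal := by
  rw [eq_sub_iff_add_eq', ← ENNReal.toReal_add (probEvent_ne_top P E) (probEvent_ne_top P Eᶜ),
    probEvent_add_probEvent_compl, ENNReal.toReal_one]

lemma probEvent_toReal_eq_tsum (P : PMF β) (E : Set β) :
    (probEvent P E).toReal = ∑' b, E.indicator (fun b => (P b).toReal) b := by
  rw [probEvent, PMF.toOuterMeasure_apply,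
    ENNReal.tsum_toReal_eq fun b => (Set.indicator_le_self E P b).trans_lt (P.apply_lt_top b) |>.ne]
  exact congr_arg tsum (Set.indicator_comp_of_zero ENNReal.toReal_zero).symm

lemma probEvent_mono (P : PMF β) {E F : Set β} (h : E ⊆ F) : probEvent P E ≤ probEvent P F :=
  P.toOuterMeasure.mono h

lemma probEvent_bind_le (Q : PMF α) (f : α → PMF β) (E : Set β) {c : ℝ≥0∞}
    (h : ∀ a ∈ Q.support, probEvent (f a) E ≤ c) : probEvent (Q.bind f) E ≤ c := by
  rw [probEvent, PMF.toOuterMeasure_bind_apply]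
  calc ∑' a, Q a * (f a).toOuterMeasure E ≤ ∑' a, Q a * c := ENNReal.tsum_le_tsum fun a => ?_
    _ = c := by rw [ENNReal.tsum_mul_right, Q.tsum_coe, one_mul]
  by_cases ha : a ∈ Q.support
  · exact mul_le_mul_right (h a ha) _
  · simp [(PMF.apply_eq_zero_iff Q a).mpr ha]

end probEvent

section tv

variable {β : Type*}

lemma tv_comm (p q : PMF β) : tv p q = tv q p := by
  simp only [tv, abs_sub_comm]

lemma summable_abs_sub_toReal (p q : PMF β) : Summable fun b => |(p b).toReal - (q b).toReal| :=
  (p.summable_toReal.sub q.summable_toReal).abs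

lemma tv_triangle (p q r : PMF β) : tv p r ≤ tv p q + tv q r := by
  rw [tv, tv, tv, ← add_div, ← (summable_abs_sub_toReal p q).tsum_add (summable_abs_sub_toReal q r)]
  gcongr ?_ / 2
  exact (summable_abs_sub_toReal p r).tsum_le_tsum (fun b => abs_sub_le _ _ _)
    ((summable_abs_sub_toReal p q).add (summable_abs_sub_toReal q r))

lemma tsum_indicator_le_half_tsum_abs {d : β → ℝ} (hd : Summable d) (hd0 : ∑' b, d b = 0)
    (E : Set β) : ∑' b, E.indicator d b ≤ (∑' b, |d b|) / 2 := by
  calc ∑' b, E.indicator d b ≤ ∑' b, (|d b| + d b) / 2 :=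
        (hd.indicator E).tsum_le_tsum (fun b => ?_) ((hd.abs.add hd).div_const 2)
    _ = (∑' b, |d b|) / 2 := by rw [tsum_div_const, hd.abs.tsum_add hd, hd0, add_zero]
  by_cases hb : b ∈ E
  · rw [Set.indicator_of_mem hb]; linarith [le_abs_self (d b)]
  · rw [Set.indicator_of_notMem hb]; linarith [neg_abs_le (d b)]

lemma probEvent_toReal_le_add_tv (P Q : PMF β) (E : Set β) :
    (probEvent P E).toReal ≤ (probEvent Q E).toReal + tv P Q := by
  have hd := P.summable_toReal.sub Q.summable_toReal
  have hd0 : ∑' b, ((P b).toReal - (Q b).toReal) = 0 := by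
    rw [P.summable_toReal.tsum_sub Q.summable_toReal, P.tsum_toReal, Q.tsum_toReal, sub_self]
  rw [← sub_le_iff_le_add', probEvent_toReal_eq_tsum, probEvent_toReal_eq_tsum,
    ← (P.summable_toReal.indicator E).tsum_sub (Q.summable_toReal.indicator E)]
  simpa only [tv, Set.indicator_sub] using tsum_indicator_le_half_tsum_abs hd hd0 E

lemma half_lt_tv_of_tv_le_half {p q r : PMF β} {γ : ℝ} (hpq : γ < tv p q)
    (hr : tv r p ≤ γ / 2) : γ / 2 < tv r q := by
  linarith [tv_triangle p r q, tv_comm p r]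

end tv

theorem stmt4_general {X : Type*} (C : Set (PMF X)) (m : ℕ)
    (γ ζ : ℝ)
    (V1 V2 : Adversary X)
    (hconf : ConfusesPair C V1 V2 γ ζ m) :
    ∀ A : Multiset X → PMF X, ∃ r ∈ C,
      ENNReal.ofReal (1 / 2 - ζ / 2) ≤
          probEvent ((iid r m).bind V1) {T | γ / 2 < tv (A T) r} ∨
      ENNReal.ofReal (1 / 2 - ζ / 2) ≤
          probEvent ((iid r m).bind V2) {T | γ / 2 < tv (A T) r} := by
  intro A
  by_contra! hfail
  obtain ⟨p, hpC, Q, hQC, hQfar, hclose⟩ := hconf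
  set P1 := advPush V1 (metaSample Q m)
  set P2 := advPush V2 (iid p m)
  set E : Set (Multiset X) := {T | tv (A T) p ≤ γ / 2}
  have hEc : {T | γ / 2 < tv (A T) p} = Eᶜ := by ext; simp [E]
  have hP2 : (probEvent P2 Eᶜ).toReal < 1 / 2 - ζ / 2 :=
    (ENNReal.lt_ofReal_iff_toReal_lt (probEvent_ne_top _ _)).1 (hEc ▸ (hfail p hpC).2)
  have hP1 : probEvent P1 E ≤ ENNReal.ofReal (1 / 2 - ζ / 2) := by
    simp only [P1, advPush, metaSample, PMF.bind_bind]
    refine probEvent_bind_le _ _ _ fun q hq => (probEvent_mono _ fun T hT => ?_).trans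
      (hfail q (hQC hq)).1.le
    exact half_lt_tv_of_tv_le_half (hQfar q hq) hT
  have hP1E := ENNReal.toReal_le_of_le_ofReal (hP2.le.trans' ENNReal.toReal_nonneg) hP1
  have hP2E := probEvent_toReal_le_add_tv P2 P1 E
  rw [tv_comm] at hP2E
  linarith [probEvent_compl_toReal P2 E]

/-- If `(V1,V2)` successfully `(γ,ζ)`-confuses `C`-generated samples of size
`m`, then every learner `A` fails on some `r ∈ C` against `V1` or against `V2`:
the error exceeds `γ/2` with probability at least `1/2 − ζ/2` (over the sample and the
adversary's internal randomness). -/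
theorem stmt4 {X : Type*} [Countable X] (C : Set (PMF X)) (m : ℕ)
    (γ ζ : ℝ) (hγ : γ ∈ Set.Ioo (0 : ℝ) 1) (hζ : ζ ∈ Set.Ioo (0 : ℝ) 1)
    (V1 V2 : Adversary X)
    (hconf : ConfusesPair C V1 V2 γ ζ m) :
    ∀ A : Multiset X → PMF X, ∃ r ∈ C,
      ENNReal.ofReal (1 / 2 - ζ / 2) ≤
          probEvent ((iid r m).bind V1) {T | γ / 2 < tv (A T) r} ∨
      ENNReal.ofReal (1 / 2 - ζ / 2) ≤
          probEvent ((iid r m).bind V2) {T | γ / 2 < tv (A T) r} :=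
  stmt4_general C m γ ζ V1 V2 hconf
end

section
/- Let C be a class of distributions on a countable domain X and let V_sub be a subtractive adaptive adversary. Let ζ ∈ (0,1), m ∈ ℕ, p ∈ C, and let Q be a meta-distribution over C such that d_TV(V_sub(|Q|^m), V_sub(p^m)) < ζ. Then for every k ∈ ℕ there exists an adaptive additive adversary V_{add,k} such that d_TV(V_{add,k}(|Q|^m), V_{add,k}(p^m)) < ζ + 1/(k+1). Furthermore, if V_sub has fixed constant budget η < 2/k, then V_{add,k} has fixed constant budget of no more than kη. -/
open scoped ENNReal NNReal

/-! Write a sample as `S = t + r`, where `t` is what `V_sub` keeps. Given `t`, the additive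
adversary adds `k` fresh independent copies of a removed part, `j` of them drawn from its
conditional law under `p^m` and `k - j` from that under `|Q|^m`, with `j` uniform on `{0, …, k}`.
As `S` already contains the genuine copy `r`, the output is `t` plus `k + 1` independent copies,
`i` of them of the `p^m` kind, where `i = j` under `|Q|^m` and `i = j + 1` under `p^m`, and `t`
follows `V_sub(|Q|^m)` resp. `V_sub(p^m)`. Matching equal `i`, all but one of the `k + 1` pairs of
mixture components differ only in the law of `t`, so the distance is at most `(k ζ + 1)/(k + 1)`.
Every output has `k |r|` new points, `k` times the budget of `V_sub`; samples of other sizes are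
padded at the same rate. -/

theorem ENNReal.tsum_sub_tsum_le {ι : Type*} (f g : ι → ℝ≥0∞) :
    ∑' i, f i - ∑' i, g i ≤ ∑' i, (f i - g i) := by
  rw [tsub_le_iff_right, ← ENNReal.tsum_add]
  exact ENNReal.tsum_le_tsum fun i => le_tsub_add

namespace PMF

variable {ι α β : Type*}

/-- Twice the total variation distance; `(a - b) + (b - a)` is `|a - b|` under the truncated
subtraction of `ℝ≥0∞`, where no summability side conditions arise. -/
noncomputable def l1Dist (p q : PMF α) : ℝ≥0∞ :=
  ∑' a, ((p a - q a) + (q a - p a))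

theorem l1Dist_le_two (p q : PMF α) : l1Dist p q ≤ 2 :=
  calc l1Dist p q ≤ ∑' a, (p a + q a) :=
        ENNReal.tsum_le_tsum fun a => add_le_add tsub_le_self tsub_le_self
    _ = 2 := by rw [ENNReal.tsum_add, p.tsum_coe, q.tsum_coe, one_add_one_eq_two]

theorem l1Dist_ne_top (p q : PMF α) : l1Dist p q ≠ ⊤ :=
  ne_top_of_le_ne_top ENNReal.ofNat_ne_top (l1Dist_le_two p q)

theorem tv_eq_l1Dist (p q : PMF α) : tv p q = (l1Dist p q).toReal / 2 := by
  rw [tv, l1Dist, ENNReal.tsum_toReal_eq fun a => ENNReal.add_ne_top.2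
    ⟨ENNReal.sub_ne_top (p.apply_ne_top a), ENNReal.sub_ne_top (q.apply_ne_top a)⟩]
  congr 1
  refine tsum_congr fun a => ?_
  rcases le_total (p a) (q a) with h | h
  · rw [tsub_eq_zero_of_le h, zero_add, ENNReal.toReal_sub_of_le h (q.apply_ne_top a),
      abs_sub_comm, abs_of_nonneg (sub_nonneg.2 (ENNReal.toReal_mono (q.apply_ne_top a) h))]
  · rw [tsub_eq_zero_of_le h, add_zero, ENNReal.toReal_sub_of_le h (p.apply_ne_top a),
      abs_of_nonneg (sub_nonneg.2 (ENNReal.toReal_mono (p.apply_ne_top a) h))]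

theorem tv_nonneg (p q : PMF α) : 0 ≤ tv p q := by
  rw [tv_eq_l1Dist]
  positivity

theorem l1Dist_bind_bind_le (μ : PMF ι) (f g : ι → PMF α) :
    l1Dist (μ.bind f) (μ.bind g) ≤ ∑' i, μ i * l1Dist (f i) (g i) := by
  have hmul : ∀ i (a b : ℝ≥0∞), μ i * a - μ i * b = μ i * (a - b) := fun i a b =>
    (ENNReal.mul_sub fun _ _ => μ.apply_ne_top i).symm
  calc l1Dist (μ.bind f) (μ.bind g)
      ≤ ∑' a, ∑' i, μ i * ((f i a - g i a) + (g i a - f i a)) := by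
        refine ENNReal.tsum_le_tsum fun a => ?_
        simp only [bind_apply, mul_add, ← hmul, ENNReal.tsum_add]
        exact add_le_add (ENNReal.tsum_sub_tsum_le _ _) (ENNReal.tsum_sub_tsum_le _ _)
    _ = ∑' i, μ i * l1Dist (f i) (g i) := by
        rw [ENNReal.tsum_comm]
        simp only [ENNReal.tsum_mul_left, l1Dist]

theorem l1Dist_bind_le (p q : PMF α) (f : α → PMF β) :
    l1Dist (p.bind f) (q.bind f) ≤ l1Dist p q := by
  have hmul : ∀ a b (x y : ℝ≥0∞), x * f a b - y * f a b = (x - y) * f a b := fun a b x y =>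
    (ENNReal.sub_mul fun _ _ => (f a).apply_ne_top b).symm
  calc l1Dist (p.bind f) (q.bind f)
      ≤ ∑' b, ∑' a, ((p a - q a) + (q a - p a)) * f a b := by
        refine ENNReal.tsum_le_tsum fun b => ?_
        simp only [bind_apply, add_mul, ← hmul, ENNReal.tsum_add]
        exact add_le_add (ENNReal.tsum_sub_tsum_le _ _) (ENNReal.tsum_sub_tsum_le _ _)
    _ = l1Dist p q := by
        rw [ENNReal.tsum_comm]
        simp only [ENNReal.tsum_mul_left, tsum_coe, mul_one, l1Dist]

theorem bind_uniformOfFintype_comp_equiv [Fintype ι] [Nonempty ι] (e : ι ≃ ι) (f : ι → PMF α) :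
    (uniformOfFintype ι).bind (f ∘ e) = (uniformOfFintype ι).bind f := by
  ext a
  simp only [bind_apply, uniformOfFintype_apply, Function.comp_apply]
  exact e.tsum_eq fun i => (Fintype.card ι : ℝ≥0∞)⁻¹ * f i a

/-- Hybrid argument: after rotating the index of the first mixture by one, all but one pair of
components share the kernel `L (j + 1)`, so they differ only in the input law. -/
theorem tv_uniform_bind_shift_le (μ₁ μ₂ : PMF α) (L : ℕ → α → PMF β) (k : ℕ) :
    tv ((uniformOfFintype (Fin (k + 1))).bind fun j => μ₁.bind (L j))
      ((uniformOfFintype (Fin (k + 1))).bind fun j => μ₂.bind (L (j + 1)))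
      ≤ (k * tv μ₁ μ₂ + 1) / (k + 1) := by
  set f : Fin (k + 1) → PMF β := fun j => μ₁.bind (L j)
  have hpairs : ∑ j : Fin (k + 1), l1Dist (f (finRotate _ j)) (μ₂.bind (L (j + 1)))
      ≤ k * l1Dist μ₁ μ₂ + 2 := by
    rw [Fin.sum_univ_castSucc, finRotate_last]
    refine add_le_add ?_ (l1Dist_le_two _ _)
    calc _ ≤ ∑ _i : Fin k, l1Dist μ₁ μ₂ := Finset.sum_le_sum fun i _ => by
          simp only [f, coe_finRotate_of_ne_last (Fin.castSucc_lt_last i).ne, Fin.val_castSucc]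
          exact l1Dist_bind_le _ _ _
      _ = k * l1Dist μ₁ μ₂ := by simp
  have hl1 : (k + 1 : ℝ≥0∞) * l1Dist ((uniformOfFintype (Fin (k + 1))).bind f)
      ((uniformOfFintype (Fin (k + 1))).bind fun j => μ₂.bind (L (j + 1)))
      ≤ k * l1Dist μ₁ μ₂ + 2 := by
    rw [← bind_uniformOfFintype_comp_equiv (finRotate (k + 1)) f]
    refine (mul_le_mul' le_rfl (l1Dist_bind_bind_le _ _ _)).trans ?_
    simp only [tsum_fintype, uniformOfFintype_apply, Fintype.card_fin, ← Finset.mul_sum,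
      Function.comp_apply, Nat.cast_add, Nat.cast_one, ← mul_assoc]
    rw [ENNReal.mul_inv_cancel (by positivity) (by finiteness), one_mul]
    exact hpairs
  have hfin : (k : ℝ≥0∞) * l1Dist μ₁ μ₂ ≠ ⊤ :=
    ENNReal.mul_ne_top (ENNReal.natCast_ne_top k) (l1Dist_ne_top _ _)
  have hreal := ENNReal.toReal_mono (ENNReal.add_ne_top.2 ⟨hfin, ENNReal.ofNat_ne_top⟩) hl1
  rw [ENNReal.toReal_mul, ENNReal.toReal_add hfin ENNReal.ofNat_ne_top, ENNReal.toReal_mul,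
    ENNReal.toReal_add (ENNReal.natCast_ne_top k) ENNReal.one_ne_top] at hreal
  rw [tv_eq_l1Dist, tv_eq_l1Dist, le_div_iff₀ (by positivity)]
  simp only [ENNReal.toReal_natCast, ENNReal.toReal_one, ENNReal.toReal_ofNat] at hreal
  linarith

theorem map_fst_apply (J : PMF (α × β)) (a : α) : J.map Prod.fst a = ∑' b, J (a, b) := by
  rw [map_apply, ENNReal.tsum_prod', tsum_eq_single a fun a' ha' => by simp [Ne.symm ha']]
  simp

theorem tsum_apply_prodMk_ne_top (J : PMF (α × β)) (a : α) : ∑' b, J (a, b) ≠ ⊤ := by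
  rw [← map_fst_apply]
  exact apply_ne_top _ a

/-- The conditional law of the second coordinate given that the first one is `a`; off the
support of the first marginal, where it is undetermined, it is taken to be `d a`. -/
noncomputable def condKernel (J : PMF (α × β)) (d : α → PMF β) (a : α) : PMF β :=
  if h : ∑' b, J (a, b) = 0 then d a
  else normalize (fun b => J (a, b)) h (tsum_apply_prodMk_ne_top J a)

theorem mem_support_condKernel {J : PMF (α × β)} {d : α → PMF β} {a : α} {b : β}
    (hb : b ∈ (condKernel J d a).support) : (a, b) ∈ J.support ∨ b ∈ (d a).support := by
  unfold condKernel at hb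
  split_ifs at hb
  · exact Or.inr hb
  · exact Or.inl ((mem_support_normalize_iff _ _ b).1 hb)

theorem bind_eq_bind_condKernel {γ : Type*} (J : PMF (α × β)) (d : α → PMF β)
    (G : α × β → PMF γ) :
    J.bind G = (J.map Prod.fst).bind fun a => (condKernel J d a).bind fun b => G (a, b) := by
  ext c
  simp only [bind_apply, ENNReal.tsum_prod', map_fst_apply]
  refine tsum_congr fun a => ?_
  unfold condKernel
  split_ifs with h
  · simp [ENNReal.tsum_eq_zero.1 h]
  · simp only [normalize_apply, ← ENNReal.tsum_mul_left]
    refine tsum_congr fun b => ?_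
    rw [← mul_assoc, ← mul_assoc, mul_right_comm _ (J (a, b)),
      ENNReal.mul_inv_cancel h (tsum_apply_prodMk_ne_top J a), one_mul]

theorem bind_congr_of_mem_support {p : PMF α} {f g : α → PMF β}
    (h : ∀ a ∈ p.support, f a = g a) : p.bind f = p.bind g := by
  ext b
  refine tsum_congr fun a => ?_
  by_cases ha : p a = 0
  · simp [ha]
  · rw [h a ha]

end PMF

open Multiset

section Samples

variable {X : Type*}

theorem card_of_mem_support_iid {p : PMF X} {n : ℕ} {S : Multiset X}
    (hS : S ∈ (iid p n).support) : card S = n := by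
  induction n generalizing S with
  | zero => simp_all [iid]
  | succ n ih =>
    simp only [iid, PMF.support_bind, PMF.support_map, Set.mem_iUnion, Set.mem_image] at hS
    obtain ⟨s, hs, x, -, rfl⟩ := hS
    rw [card_cons, ih hs]

theorem card_of_mem_support_metaSample {Q : PMF (PMF X)} {n : ℕ} {S : Multiset X}
    (hS : S ∈ (metaSample Q n).support) : card S = n := by
  simp only [metaSample, PMF.support_bind, Set.mem_iUnion] at hS
  obtain ⟨q, -, hS⟩ := hS
  exact card_of_mem_support_iid hS

noncomputable def iidSum (ξ : PMF (Multiset X)) : ℕ → PMF (Multiset X)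
  | 0 => PMF.pure 0
  | n + 1 => ξ.bind fun r => (iidSum ξ n).map (r + ·)

noncomputable def hybridSum (ξ₁ ξ₂ : PMF (Multiset X)) (a b : ℕ) : PMF (Multiset X) :=
  (iidSum ξ₁ a).bind fun w => (iidSum ξ₂ b).map (w + ·)

theorem card_of_mem_support_iidSum {ξ : PMF (Multiset X)} {D : ℕ}
    (hξ : ∀ r ∈ ξ.support, card r = D) {n : ℕ} {w : Multiset X}
    (hw : w ∈ (iidSum ξ n).support) : card w = n * D := by
  induction n generalizing w with
  | zero => simp_all [iidSum]
  | succ n ih =>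
    simp only [iidSum, PMF.support_bind, PMF.support_map, Set.mem_iUnion, Set.mem_image] at hw
    obtain ⟨r, hr, w, hw, rfl⟩ := hw
    rw [card_add, hξ r hr, ih hw, Nat.succ_mul, add_comm]

theorem card_of_mem_support_hybridSum {ξ₁ ξ₂ : PMF (Multiset X)} {D : ℕ}
    (hξ₁ : ∀ r ∈ ξ₁.support, card r = D) (hξ₂ : ∀ r ∈ ξ₂.support, card r = D) {a b : ℕ}
    {w : Multiset X} (hw : w ∈ (hybridSum ξ₁ ξ₂ a b).support) : card w = (a + b) * D := by
  simp only [hybridSum, PMF.support_bind, PMF.support_map, Set.mem_iUnion, Set.mem_image] at hw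
  obtain ⟨w₁, hw₁, w₂, hw₂, rfl⟩ := hw
  rw [card_add, card_of_mem_support_iidSum hξ₁ hw₁, card_of_mem_support_iidSum hξ₂ hw₂, add_mul]

theorem bind_map_add_hybridSum_left (ξ₁ ξ₂ : PMF (Multiset X)) (a b : ℕ) :
    ξ₁.bind (fun r => (hybridSum ξ₁ ξ₂ a b).map (r + ·)) = hybridSum ξ₁ ξ₂ (a + 1) b := by
  simp only [hybridSum, iidSum, PMF.map_bind, PMF.bind_bind, PMF.bind_map, PMF.map_comp]
  congr! 4 with r w
  simp [Function.comp_def, add_assoc]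

theorem bind_map_add_hybridSum_right (ξ₁ ξ₂ : PMF (Multiset X)) (a b : ℕ) :
    ξ₂.bind (fun r => (hybridSum ξ₁ ξ₂ a b).map (r + ·)) = hybridSum ξ₁ ξ₂ a (b + 1) := by
  simp only [hybridSum, iidSum, PMF.map_bind, PMF.map_comp]
  rw [PMF.bind_comm]
  congr! 4 with w r
  simp [Function.comp_def, add_left_comm]

end Samples

section Padding

variable {X : Type*}

noncomputable def padAdversary (V : Adversary X) (m : ℕ) (η : ℝ) (x₀ : X) : Adversary X :=
  fun S => if card S = m then V S else PMF.pure (S + replicate ⌊η * card S⌋₊ x₀)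

variable {V : Adversary X} {m : ℕ} {η : ℝ} {x₀ : X}

theorem isAdditive_padAdversary (hV : IsAdditive V) : IsAdditive (padAdversary V m η x₀) := by
  intro S T hT
  unfold padAdversary at hT
  split_ifs at hT
  · exact hV S T hT
  · rw [(PMF.mem_support_pure_iff _ _).1 hT]
    exact le_add_right S _

theorem advPush_padAdversary {P : PMF (Multiset X)} (hP : ∀ S ∈ P.support, card S = m) :
    advPush (padAdversary V m η x₀) P = advPush V P :=
  PMF.bind_congr_of_mem_support fun S hS => if_pos (hP S hS)

theorem fixedBudgetAdd_padAdversary (hη : 0 ≤ η)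
    (hV : ∀ S, card S = m → ∀ T ∈ (V S).support, card T = m + ⌊η * m⌋₊) :
    FixedBudgetAdd (padAdversary V m η x₀) η := by
  refine ⟨fun n => n + ⌊η * n⌋₊, fun S T hT => ?_, fun n => ?_⟩
  · unfold padAdversary at hT
    split_ifs at hT with hS
    · rw [hV S hS T hT, hS]
    · rw [(PMF.mem_support_pure_iff _ _).1 hT, card_add, card_replicate]
  · push_cast
    rw [add_sub_cancel_left]
    exact ⟨Nat.sub_one_lt_floor _, Nat.floor_le (by positivity)⟩

end Padding

section Hybrid

variable {X β : Type*} [DecidableEq X]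

noncomputable def removedJoint (V : Adversary X) (P : PMF (Multiset X)) :
    PMF (Multiset X × Multiset X) :=
  P.bind fun S => (V S).map fun t => (t, S - t)

theorem map_fst_removedJoint (V : Adversary X) (P : PMF (Multiset X)) :
    (removedJoint V P).map Prod.fst = advPush V P := by
  simp only [removedJoint, advPush, PMF.map_bind, PMF.map_comp]
  exact congrArg _ (funext fun S => PMF.map_id _)

theorem mem_support_removedJoint {V : Adversary X} {P : PMF (Multiset X)} {t r : Multiset X}
    (h : (t, r) ∈ (removedJoint V P).support) :
    ∃ S ∈ P.support, t ∈ (V S).support ∧ S - t = r := by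
  simp only [removedJoint, PMF.support_bind, PMF.support_map, Set.mem_iUnion, Set.mem_image,
    Prod.mk.injEq] at h
  obtain ⟨S, hS, t, ht, rfl, rfl⟩ := h
  exact ⟨S, hS, ht, rfl⟩

/-- Since `S = t + (S - t)`, a sample can be regenerated from what the adversary keeps,
followed by the conditional law of what it removed. -/
theorem bind_bind_eq_advPush_bind_condKernel {V : Adversary X} (hV : IsSubtractive V)
    (P : PMF (Multiset X)) (d : Multiset X → PMF (Multiset X))
    (G : Multiset X → Multiset X → PMF β) :
    P.bind (fun S => (V S).bind fun t => G t S) = (advPush V P).bind fun t =>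
      (PMF.condKernel (removedJoint V P) d t).bind fun r => G t (t + r) := by
  rw [← map_fst_removedJoint, ← PMF.bind_eq_bind_condKernel _ d fun z => G z.1 (z.1 + z.2),
    removedJoint, PMF.bind_bind]
  refine congrArg _ (funext fun S => ?_)
  rw [PMF.bind_map]
  exact PMF.bind_congr_of_mem_support fun t ht => by
    simp [add_tsub_cancel_of_le (hV S t ht)]

noncomputable def hybridAdversary (V : Adversary X) (P₁ P₂ : PMF (Multiset X))
    (d : Multiset X → PMF (Multiset X)) (k : ℕ) : Adversary X := fun S =>
  (V S).bind fun t => (PMF.uniformOfFintype (Fin (k + 1))).bind fun j =>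
    (hybridSum (PMF.condKernel (removedJoint V P₁) d t) (PMF.condKernel (removedJoint V P₂) d t)
      (k - j) j).map (S + ·)

variable {V : Adversary X} {P₁ P₂ : PMF (Multiset X)} {d : Multiset X → PMF (Multiset X)}

theorem isAdditive_hybridAdversary (k : ℕ) : IsAdditive (hybridAdversary V P₁ P₂ d k) := by
  intro S T hT
  simp only [hybridAdversary, PMF.support_bind, PMF.support_map, Set.mem_iUnion,
    Set.mem_image] at hT
  obtain ⟨t, -, j, -, w, -, rfl⟩ := hT
  exact le_add_right S w

theorem advPush_hybridAdversary (hV : IsSubtractive V) (k : ℕ) (P : PMF (Multiset X)) :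
    advPush (hybridAdversary V P₁ P₂ d k) P =
      (PMF.uniformOfFintype (Fin (k + 1))).bind fun j => (advPush V P).bind fun t =>
        ((PMF.condKernel (removedJoint V P) d t).bind fun r =>
          (hybridSum (PMF.condKernel (removedJoint V P₁) d t)
            (PMF.condKernel (removedJoint V P₂) d t) (k - j) j).map (r + ·)).map (t + ·) := by
  unfold advPush hybridAdversary
  rw [bind_bind_eq_advPush_bind_condKernel hV P d, PMF.bind_comm (PMF.uniformOfFintype _)]
  refine congrArg _ (funext fun t => ?_)
  rw [PMF.bind_comm]
  refine congrArg _ (funext fun j => ?_)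
  simp only [PMF.map_bind, PMF.map_comp, Function.comp_def, add_assoc]

theorem tv_advPush_hybridAdversary_le (hV : IsSubtractive V) (k : ℕ) :
    tv (advPush (hybridAdversary V P₁ P₂ d k) P₁) (advPush (hybridAdversary V P₁ P₂ d k) P₂)
      ≤ (k * tv (advPush V P₁) (advPush V P₂) + 1) / (k + 1) := by
  set ξ₁ := PMF.condKernel (removedJoint V P₁) d
  set ξ₂ := PMF.condKernel (removedJoint V P₂) d
  convert PMF.tv_uniform_bind_shift_le (advPush V P₁) (advPush V P₂)
    (fun i t => (hybridSum (ξ₁ t) (ξ₂ t) (k + 1 - i) i).map (t + ·)) k using 2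
  all_goals
    simp only [advPush_hybridAdversary hV, bind_map_add_hybridSum_left,
      bind_map_add_hybridSum_right]
    refine congrArg _ (funext fun j => congrArg _ (funext fun t => ?_))
  · rw [Nat.sub_add_comm j.is_le]
  · rw [Nat.add_sub_add_right]

theorem card_of_mem_support_condKernel_removedJoint (hV : IsSubtractive V) {m : ℕ}
    {P : PMF (Multiset X)} (hP : ∀ S ∈ P.support, card S = m)
    (hd : ∀ t, ∀ r ∈ (d t).support, card r = m - card t) {t r : Multiset X}
    (hr : r ∈ (PMF.condKernel (removedJoint V P) d t).support) : card r = m - card t := by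
  rcases PMF.mem_support_condKernel hr with h | h
  · obtain ⟨S, hS, ht, rfl⟩ := mem_support_removedJoint h
    rw [card_sub (hV S t ht), hP S hS]
  · exact hd t r h

theorem card_of_mem_support_hybridAdversary (hV : IsSubtractive V) {m : ℕ}
    (hP₁ : ∀ S ∈ P₁.support, card S = m) (hP₂ : ∀ S ∈ P₂.support, card S = m)
    (hd : ∀ t, ∀ r ∈ (d t).support, card r = m - card t) {k : ℕ} {S T : Multiset X}
    (hT : T ∈ (hybridAdversary V P₁ P₂ d k S).support) :
    ∃ t ∈ (V S).support, card T = card S + k * (m - card t) := by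
  simp only [hybridAdversary, PMF.support_bind, PMF.support_map, Set.mem_iUnion,
    Set.mem_image] at hT
  obtain ⟨t, ht, j, -, w, hw, rfl⟩ := hT
  refine ⟨t, ht, ?_⟩
  rw [card_add, card_of_mem_support_hybridSum
    (fun r => card_of_mem_support_condKernel_removedJoint hV hP₁ hd)
    (fun r => card_of_mem_support_condKernel_removedJoint hV hP₂ hd) hw,
    Nat.sub_add_cancel j.is_le]

end Hybrid

theorem stmt10_general {X : Type*} (Vs : Adversary X)
    (hVs : IsSubtractive Vs) (ζ : ℝ) (m : ℕ)
    (p : PMF X) (Q : PMF (PMF X))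
    (hclose : tv (advPush Vs (metaSample Q m)) (advPush Vs (iid p m)) < ζ) :
    ∀ k : ℕ, ∃ Vadd : Adversary X, IsAdditive Vadd ∧
      tv (advPush Vadd (metaSample Q m)) (advPush Vadd (iid p m)) < ζ + 1 / (k + 1) ∧
      ∀ η : ℝ, 0 < η → η < 2 / k → FixedBudgetSub Vs η →
        ∃ η' : ℝ, 0 ≤ η' ∧ η' ≤ k * η ∧ FixedBudgetAdd Vadd η' := by
  classical
  intro k
  obtain ⟨x₀, -⟩ := p.support_nonempty
  obtain ⟨t₀, ht₀⟩ := (Vs (Multiset.replicate m x₀)).support_nonempty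
  set H := hybridAdversary Vs (metaSample Q m) (iid p m)
    (fun t => PMF.pure (Multiset.replicate (m - Multiset.card t) x₀)) k
  set D := m - Multiset.card t₀
  set η' : ℝ := k * D / m
  refine ⟨padAdversary H m η' x₀, isAdditive_padAdversary (isAdditive_hybridAdversary k), ?_, ?_⟩
  · rw [advPush_padAdversary fun S => card_of_mem_support_metaSample,
      advPush_padAdversary fun S => card_of_mem_support_iid]
    refine (tv_advPush_hybridAdversary_le hVs k).trans_lt ?_
    have h0 := PMF.tv_nonneg (advPush Vs (metaSample Q m)) (advPush Vs (iid p m))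
    have hscaled : k * tv (advPush Vs (metaSample Q m)) (advPush Vs (iid p m)) / (k + 1) < ζ :=
      (div_le_of_le_mul₀ (by positivity) h0 (by nlinarith)).trans_lt hclose
    rw [add_div]
    linarith
  · rintro η hη - ⟨c, hc, hbudget⟩
    have hct₀ : Multiset.card t₀ = c m := by simpa using hc _ _ ht₀
    have hD : (D : ℝ) ≤ η * m := by
      have hle : Multiset.card t₀ ≤ m := by simpa using Multiset.card_le_card (hVs _ _ ht₀)
      rw [Nat.cast_sub hle, hct₀]
      exact (hbudget m).2
    have hη'm : η' * m = (k * D : ℕ) := by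
      push_cast
      exact div_mul_cancel_of_imp fun h => by simp [D, Nat.cast_eq_zero.1 h]
    refine ⟨η', by positivity, div_le_of_le_mul₀ (by positivity) (by positivity) ?_,
      fixedBudgetAdd_padAdversary (by positivity) fun S hS T hT => ?_⟩
    · nlinarith
    · obtain ⟨t, ht, hT⟩ := card_of_mem_support_hybridAdversary hVs
        (fun S => card_of_mem_support_metaSample) (fun S => card_of_mem_support_iid)
        (fun t r hr => by rw [(PMF.mem_support_pure_iff _ _).1 hr, Multiset.card_replicate]) hT
      rw [hT, hS, hη'm, Nat.floor_natCast, hc S t ht, hS, ← hct₀]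

/-- If a subtractive adversary `V_sub` makes `|Q|^m` and `p^m`
ζ-indistinguishable, then for every `k ∈ ℕ` there is a single additive adversary `V_{add,k}`
with `d_TV(V_{add,k}(|Q|^m), V_{add,k}(p^m)) < ζ + 1/(k+1)`; moreover if `V_sub` has fixed
constant budget `η < 2/k`, then `V_{add,k}` has fixed constant budget at most `kη`. -/
theorem stmt10 {X : Type*} [Countable X] (C : Set (PMF X)) (Vs : Adversary X)
    (hVs : IsSubtractive Vs) (ζ : ℝ) (hζ : ζ ∈ Set.Ioo (0 : ℝ) 1) (m : ℕ)
    (p : PMF X) (hp : p ∈ C) (Q : PMF (PMF X)) (hQ : Q.support ⊆ C)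
    (hclose : tv (advPush Vs (metaSample Q m)) (advPush Vs (iid p m)) < ζ) :
    ∀ k : ℕ, ∃ Vadd : Adversary X, IsAdditive Vadd ∧
      tv (advPush Vadd (metaSample Q m)) (advPush Vadd (iid p m)) < ζ + 1 / (k + 1) ∧
      ∀ η : ℝ, 0 < η → η < 2 / k → FixedBudgetSub Vs η →
        ∃ η' : ℝ, 0 ≤ η' ∧ η' ≤ k * η ∧ FixedBudgetAdd Vadd η' :=
  stmt10_general Vs hVs ζ m p Q hclose
end
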